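/- Let R be a commutative ring and l ≥ 2. Let h ∈ GL(l,R) be a matrix whose (l,1) entry is zero. Then for every ξ ∈ R the conjugate z = H(h)^{-1}·(I + ξ·E_{2l,l})·H(h) lies in the embedded Sp(2(l−1),R) inside Sp(2l,R); in particular z fixes both e₁ and e_{l+1}. (This is Lemma 3.4(b) of the paper in the case Φ = C_l, transported to the symplectic group: the conjugate of the negative long simple root subgroup by an element of the 'reduced' set S̃ lands in the Levi subgroup of type C_{l−1}.) -/

import Mathlib

open Matrix

/-- A vector is *unimodular* if its entries generate the unit ideal of `R`. -/
def Unimodular (R : Type*) [CommRing R] {ι : Type*} (v : ι → R) : Prop :=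
  Ideal.span (Set.range v) = ⊤

/-- `sr(R) ≤ k`: for every `m ≥ k`, every unimodular column of height `m + 1` is stable. -/
def SRleq (R : Type*) [CommRing R] (k : ℕ) : Prop :=
  ∀ m : ℕ, k ≤ m → ∀ a : Fin (m + 1) → R, Unimodular R a →
    ∃ b : Fin m → R,
      Unimodular R fun i : Fin m => a i.castSucc + b i * a (Fin.last m)

/-- `𝔏(a)`: the intersection of all maximal ideals containing every entry of `a`
(`⊤ = R` if there is no such maximal ideal). -/
def Lideal (R : Type*) [CommRing R] {ι : Type*} (a : ι → R) : Ideal R :=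
  sInf {I : Ideal R | I.IsMaximal ∧ ∀ i, a i ∈ I}

/-- `asr(R) ≤ k`: the absolute stable rank condition. -/
def ASRleq (R : Type*) [CommRing R] (k : ℕ) : Prop :=
  ∀ m : ℕ, k ≤ m → ∀ a : Fin (m + 1) → R,
    ∃ b : Fin m → R,
      Lideal R (fun i : Fin m => a i.castSucc + b i * a (Fin.last m)) = Lideal R a

/-- The set of elementary transvections `1 + t·E i j`, `i ≠ j`, viewed inside `GL`. -/
def ElemGen (R : Type*) [CommRing R] (ι : Type*) [Fintype ι] [DecidableEq ι] :
    Set (Matrix ι ι R)ˣ :=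
  {u | ∃ i j : ι, i ≠ j ∧ ∃ t : R, (u : Matrix ι ι R) = 1 + Matrix.single i j t}

/-- The elementary subgroup `E(ι, R) ≤ GL(ι, R)`. -/
def Esubgroup (R : Type*) [CommRing R] (ι : Type*) [Fintype ι] [DecidableEq ι] :
    Subgroup (Matrix ι ι R)ˣ :=
  Subgroup.closure (ElemGen R ι)

/-- Generators of `Ẽ(n, R)`: elementary transvections, mixed commutators `[a, g]` with
`a ∈ E(n,R)`, `g ∈ GL(n,R)`, and elements `(1 + xy)(1 + yx)⁻¹` with `y = diag(ξ,1,…,1)`. -/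
def EtildeGen (R : Type*) [CommRing R] (n : ℕ) : Set (Matrix (Fin n) (Fin n) R)ˣ :=
  ElemGen R (Fin n) ∪
  {w | ∃ a ∈ Esubgroup R (Fin n), ∃ g : (Matrix (Fin n) (Fin n) R)ˣ,
        w = a * g * a⁻¹ * g⁻¹} ∪
  {w | ∃ (ξ : R) (x : Matrix (Fin n) (Fin n) R) (p q : (Matrix (Fin n) (Fin n) R)ˣ),
        (p : Matrix (Fin n) (Fin n) R)
          = 1 + x * Matrix.diagonal (fun i : Fin n => if (i : ℕ) = 0 then ξ else 1) ∧
        (q : Matrix (Fin n) (Fin n) R)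
          = 1 + Matrix.diagonal (fun i : Fin n => if (i : ℕ) = 0 then ξ else 1) * x ∧
        w = p * q⁻¹}

/-- `Ẽ(n, R)`: the normal closure in `GL(n, R)` of the subgroup generated by `EtildeGen`. -/
def Etilde (R : Type*) [CommRing R] (n : ℕ) : Subgroup (Matrix (Fin n) (Fin n) R)ˣ :=
  Subgroup.normalClosure (EtildeGen R n)

/-- Stabilization `GL(n,R) → GL(n+1,R)`, `g ↦ diag(g, 1)`. -/
def stabGL (R : Type*) [CommRing R] {n : ℕ} (g : (Matrix (Fin n) (Fin n) R)ˣ) :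
    (Matrix (Fin (n + 1)) (Fin (n + 1)) R)ˣ where
  val := (fromBlocks g.val 0 0 (1 : Matrix (Fin 1) (Fin 1) R)).submatrix
      finSumFinEquiv.symm finSumFinEquiv.symm
  inv := (fromBlocks g.inv 0 0 (1 : Matrix (Fin 1) (Fin 1) R)).submatrix
      finSumFinEquiv.symm finSumFinEquiv.symm
  val_inv := by
    rw [Matrix.submatrix_mul_equiv, Matrix.fromBlocks_multiply]
    simp [g.val_inv]
  inv_val := by
    rw [Matrix.submatrix_mul_equiv, Matrix.fromBlocks_multiply]
    simp [g.inv_val]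

/-- Generators of the elementary symplectic group, with indices restricted to `S`. -/
def spGen (R : Type*) [CommRing R] {ι : Type*} [DecidableEq ι] (S : Set ι) :
    Set (Matrix (ι ⊕ ι) (ι ⊕ ι) R) :=
  {x | ∃ t : R,
    (∃ i ∈ S, x = 1 + Matrix.single (Sum.inl i) (Sum.inr i) t) ∨
    (∃ i ∈ S, x = 1 + Matrix.single (Sum.inr i) (Sum.inl i) t) ∨
    (∃ i ∈ S, ∃ j ∈ S, i ≠ j ∧
      x = 1 + (Matrix.single (Sum.inl i) (Sum.inl j) t
             - Matrix.single (Sum.inr j) (Sum.inr i) t)) ∨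
    (∃ i ∈ S, ∃ j ∈ S, i ≠ j ∧
      x = 1 + (Matrix.single (Sum.inl i) (Sum.inr j) t
             + Matrix.single (Sum.inl j) (Sum.inr i) t)) ∨
    (∃ i ∈ S, ∃ j ∈ S, i ≠ j ∧
      x = 1 + (Matrix.single (Sum.inr i) (Sum.inl j) t
             + Matrix.single (Sum.inr j) (Sum.inl i) t))}

/-- The elementary symplectic group `Ep` (with indices restricted to `S`),
as a subgroup of `GL(ι ⊕ ι, R)`. -/
def EpS (R : Type*) [CommRing R] (ι : Type*) [Fintype ι] [DecidableEq ι] (S : Set ι) :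
    Subgroup (Matrix (ι ⊕ ι) (ι ⊕ ι) R)ˣ :=
  Subgroup.closure
    {u : (Matrix (ι ⊕ ι) (ι ⊕ ι) R)ˣ | (u : Matrix (ι ⊕ ι) (ι ⊕ ι) R) ∈ spGen R S}

/-- The matrix `J = (0 I; -I 0)`. -/
def Jmat (R : Type*) [CommRing R] (ι : Type*) [DecidableEq ι] : Matrix (ι ⊕ ι) (ι ⊕ ι) R :=
  fromBlocks 0 1 (-1) 0

/-- `x` is symplectic: `xᵀ J x = J`. -/
def IsSymplectic (R : Type*) [CommRing R] {ι : Type*} [Fintype ι] [DecidableEq ι]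
    (x : Matrix (ι ⊕ ι) (ι ⊕ ι) R) : Prop :=
  xᵀ * Jmat R ι * x = Jmat R ι

/-- The hyperbolic embedding `H(g) = diag(g, (gᵀ)⁻¹)`. -/
def Hyp (R : Type*) [CommRing R] {ι : Type*} [Fintype ι] [DecidableEq ι]
    (g : (Matrix ι ι R)ˣ) : (Matrix (ι ⊕ ι) (ι ⊕ ι) R)ˣ where
  val := fromBlocks g.val 0 0 g.invᵀ
  inv := fromBlocks g.inv 0 0 g.valᵀ
  val_inv := by
    rw [Matrix.fromBlocks_multiply]
    simp [← Matrix.transpose_mul, g.val_inv, g.inv_val]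
  inv_val := by
    rw [Matrix.fromBlocks_multiply]
    simp [← Matrix.transpose_mul, g.val_inv, g.inv_val]

/-- `diag(1, g)` as an element of `GL(l + 1, R)`. -/
def diagOneGL (R : Type*) [CommRing R] {l : ℕ} (g : (Matrix (Fin l) (Fin l) R)ˣ) :
    (Matrix (Fin (l + 1)) (Fin (l + 1)) R)ˣ where
  val := (fromBlocks (1 : Matrix (Fin 1) (Fin 1) R) 0 0 g.val).submatrix
      (finSumFinEquiv.trans (finCongr (Nat.add_comm 1 l))).symm
      (finSumFinEquiv.trans (finCongr (Nat.add_comm 1 l))).symm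
  inv := (fromBlocks (1 : Matrix (Fin 1) (Fin 1) R) 0 0 g.inv).submatrix
      (finSumFinEquiv.trans (finCongr (Nat.add_comm 1 l))).symm
      (finSumFinEquiv.trans (finCongr (Nat.add_comm 1 l))).symm
  val_inv := by
    rw [Matrix.submatrix_mul_equiv, Matrix.fromBlocks_multiply]
    simp [g.val_inv]
    exact Matrix.submatrix_one _ ((Equiv.injective _).comp (Equiv.injective _))
  inv_val := by
    rw [Matrix.submatrix_mul_equiv, Matrix.fromBlocks_multiply]
    simp [g.inv_val]
    exact Matrix.submatrix_one _ ((Equiv.injective _).comp (Equiv.injective _))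

/-- `U(2l, R)`: symplectic matrices with zero lower-left block and
upper unitriangular upper-left block. -/
def Upos (R : Type*) [CommRing R] (l : ℕ) :
    Set (Matrix (Fin l ⊕ Fin l) (Fin l ⊕ Fin l) R) :=
  {x | IsSymplectic R x ∧ (∀ i j, x (Sum.inr i) (Sum.inl j) = 0) ∧
       (∀ i j : Fin l, j < i → x (Sum.inl i) (Sum.inl j) = 0) ∧
       (∀ i, x (Sum.inl i) (Sum.inl i) = 1)}

/-- `U⁻(2l, R)`: symplectic matrices with zero upper-right block and
lower unitriangular upper-left block. -/
def Uneg (R : Type*) [CommRing R] (l : ℕ) :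
    Set (Matrix (Fin l ⊕ Fin l) (Fin l ⊕ Fin l) R) :=
  {x | IsSymplectic R x ∧ (∀ i j, x (Sum.inl i) (Sum.inr j) = 0) ∧
       (∀ i j : Fin l, i < j → x (Sum.inl i) (Sum.inl j) = 0) ∧
       (∀ i, x (Sum.inl i) (Sum.inl i) = 1)}

/-- Lemma 3.4(b), case `Φ = C_l`, in the symplectic group;
`l = m + 1 ≥ 2`. If the `(l, 1)` entry of `h ∈ GL(l, R)` is zero, then
`z = H(h)⁻¹ · (1 + ξ·E_{2l,l}) · H(h)` lies in the embedded `Sp(2(l-1), R)`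
(its rows and columns numbered `1` and `l+1` coincide with those of the identity);
in particular `z` fixes `e₁` and `e_{l+1}`. -/
theorem statement12 (R : Type*) [CommRing R] (m : ℕ) (hm : 1 ≤ m)
    (h : (Matrix (Fin (m + 1)) (Fin (m + 1)) R)ˣ) (hh : h.val (Fin.last m) 0 = 0) (ξ : R) :
    ∀ z : Matrix (Fin (m + 1) ⊕ Fin (m + 1)) (Fin (m + 1) ⊕ Fin (m + 1)) R,
      z = (Hyp R h).inv *
          (1 + Matrix.single (Sum.inr (Fin.last m)) (Sum.inl (Fin.last m)) ξ) *
          (Hyp R h).val →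
      IsSymplectic R z ∧
      (∀ j, z (Sum.inl 0) j
        = (1 : Matrix (Fin (m + 1) ⊕ Fin (m + 1)) (Fin (m + 1) ⊕ Fin (m + 1)) R) (Sum.inl 0) j) ∧
      (∀ i, z i (Sum.inl 0)
        = (1 : Matrix (Fin (m + 1) ⊕ Fin (m + 1)) (Fin (m + 1) ⊕ Fin (m + 1)) R) i (Sum.inl 0)) ∧
      (∀ j, z (Sum.inr 0) j
        = (1 : Matrix (Fin (m + 1) ⊕ Fin (m + 1)) (Fin (m + 1) ⊕ Fin (m + 1)) R) (Sum.inr 0) j) ∧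
      (∀ i, z i (Sum.inr 0)
        = (1 : Matrix (Fin (m + 1) ⊕ Fin (m + 1)) (Fin (m + 1) ⊕ Fin (m + 1)) R) i (Sum.inr 0)) ∧
      z.mulVec (Pi.single (Sum.inl 0) 1) = Pi.single (Sum.inl 0) (1 : R) ∧
      z.mulVec (Pi.single (Sum.inr 0) 1) = Pi.single (Sum.inr 0) (1 : R) := by
  intro z hz
  set l : Fin (m + 1) := Fin.last m with hl
  set C : Matrix (Fin (m + 1)) (Fin (m + 1)) R :=
    Matrix.of fun i j => h.val l i * ξ * h.val l j with hC
  have hCsymm : Cᵀ = C := by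
    ext i j
    simp [hC, Matrix.transpose_apply]
    ring
  have hE : (1 + Matrix.single (Sum.inr l) (Sum.inl l) ξ
      : Matrix (Fin (m + 1) ⊕ Fin (m + 1)) (Fin (m + 1) ⊕ Fin (m + 1)) R)
      = fromBlocks 1 0 (Matrix.single l l ξ) 1 := by
    ext (i | i) (j | j) <;>
      simp [Matrix.single, Matrix.one_apply, Matrix.fromBlocks]
  have hmid : h.valᵀ * Matrix.single l l ξ * h.val = C := by
    ext i j
    simp [Matrix.mul_apply, Matrix.single, ite_and, mul_ite, ite_mul,
      Finset.sum_ite_eq, Finset.sum_ite_eq', hC]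
  have key : z = fromBlocks 1 0 C 1 := by
    have h1 : (Hyp R h).inv = fromBlocks h.inv 0 0 h.valᵀ := rfl
    have h2 : (Hyp R h).val = fromBlocks h.val 0 0 h.invᵀ := rfl
    rw [hz, hE, h1, h2, Matrix.fromBlocks_multiply, Matrix.fromBlocks_multiply]
    rw [← hmid]
    congr 1 <;> simp [h.inv_val, ← Matrix.transpose_mul]
  have hrow1 : ∀ j, z (Sum.inl 0) j
      = (1 : Matrix (Fin (m + 1) ⊕ Fin (m + 1)) (Fin (m + 1) ⊕ Fin (m + 1)) R)
          (Sum.inl 0) j := by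
    rintro (j | j) <;> simp [key, Matrix.one_apply]
  have hcol1 : ∀ i, z i (Sum.inl 0)
      = (1 : Matrix (Fin (m + 1) ⊕ Fin (m + 1)) (Fin (m + 1) ⊕ Fin (m + 1)) R)
          i (Sum.inl 0) := by
    rintro (i | i) <;> simp [key, hC, Matrix.one_apply, hh]
  have hrow2 : ∀ j, z (Sum.inr 0) j
      = (1 : Matrix (Fin (m + 1) ⊕ Fin (m + 1)) (Fin (m + 1) ⊕ Fin (m + 1)) R)
          (Sum.inr 0) j := by
    rintro (j | j) <;> simp [key, hC, Matrix.one_apply, hh]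
  have hcol2 : ∀ i, z i (Sum.inr 0)
      = (1 : Matrix (Fin (m + 1) ⊕ Fin (m + 1)) (Fin (m + 1) ⊕ Fin (m + 1)) R)
          i (Sum.inr 0) := by
    rintro (i | i) <;> simp [key, Matrix.one_apply]
  refine ⟨?_, hrow1, hcol1, hrow2, hcol2, ?_, ?_⟩
  · unfold IsSymplectic Jmat
    rw [key, Matrix.fromBlocks_transpose, Matrix.fromBlocks_multiply,
      Matrix.fromBlocks_multiply]
    simp [hCsymm]
  · funext i
    rw [Matrix.mulVec_single]
    simp only [MulOpposite.op_one, one_smul, Matrix.col_apply]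
    rw [hcol1 i]
    rcases i with i | i <;> simp [Matrix.one_apply, Pi.single_apply, eq_comm]
  · funext i
    rw [Matrix.mulVec_single]
    simp only [MulOpposite.op_one, one_smul, Matrix.col_apply]
    rw [hcol2 i]
    rcases i with i | i <;> simp [Matrix.one_apply, Pi.single_apply, eq_comm]
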